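/- arXiv:1703.08564 — 5 statements merged into one kernel-verified Lean document; each statement's English description precedes it below -/
import Mathlib

section
/- With $S$, $P_a$, $Q$ as in the Bedford-McMullen setup and for any probability vector $\underline{p}$ on $Q$, the vector $\underline{p}'$ defined by $p'_{a,b} = p_a / T_a$ (where $p_a = \sum_{b \in P_a} p_{a,b}$ and $T_a = |P_a|$) satisfies $h(\underline{p}') \geq h(\underline{p})$ and $h_r(\underline{p}') = h_r(\underline{p})$. -/
open Real Finset

section RowAverage

variable {ι : Type*} [Fintype ι] [Nonempty ι]

lemma sum_const_sum_div_card (f : ι → ℝ) :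
    ∑ _i : ι, (∑ j, f j) / (Fintype.card ι : ℝ) = ∑ j, f j := by
  rw [sum_const, card_univ, nsmul_eq_mul, mul_div_cancel₀ _ (by positivity)]

/-- Jensen's inequality for the convex function `x ↦ x log x` with uniform weights. -/
lemma sum_mul_log_sum_div_card_le {f : ι → ℝ} (hf : ∀ i, 0 ≤ f i) :
    ∑ _i : ι, (∑ j, f j) / (Fintype.card ι : ℝ) * log ((∑ j, f j) / (Fintype.card ι : ℝ))
      ≤ ∑ i, f i * log (f i) := by
  have hT : (0 : ℝ) < Fintype.card ι := by positivity
  have jensen := convexOn_mul_log.map_sum_le (t := univ)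
    (w := fun _ : ι => (Fintype.card ι : ℝ)⁻¹) (p := f) (fun _ _ => by positivity) (by simp [hT.ne']) (fun i _ => hf i)
  simp only [smul_eq_mul] at jensen
  rw [← mul_sum, ← mul_sum, inv_mul_eq_div, inv_mul_eq_div] at jensen
  calc ∑ _i : ι, (∑ j, f j) / (Fintype.card ι : ℝ) * log ((∑ j, f j) / (Fintype.card ι : ℝ))
      = Fintype.card ι * ((∑ j, f j) / Fintype.card ι * log ((∑ j, f j) / Fintype.card ι)) := by
        rw [sum_const, card_univ, nsmul_eq_mul]
    _ ≤ Fintype.card ι * ((∑ i, f i * log (f i)) / Fintype.card ι) := by gcongr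
    _ = ∑ i, f i * log (f i) := mul_div_cancel₀ _ hT.ne'

end RowAverage

theorem stmt4_general (S : Type*) [Fintype S] (P : S → Type*) [∀ a, Fintype (P a)]
    [∀ a, Nonempty (P a)]
    (p : (Σ a : S, P a) → ℝ) (hp0 : ∀ q, 0 ≤ p q) :
    (-∑ q : (Σ a : S, P a), p q * Real.log (p q))
        ≤ (-∑ q : (Σ a : S, P a),
            ((∑ b : P q.1, p ⟨q.1, b⟩) / (Fintype.card (P q.1) : ℝ)) *
              Real.log ((∑ b : P q.1, p ⟨q.1, b⟩) / (Fintype.card (P q.1) : ℝ))) ∧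
      (-∑ a : S,
          (∑ b : P a, ((∑ b' : P a, p ⟨a, b'⟩) / (Fintype.card (P a) : ℝ))) *
            Real.log (∑ b : P a, ((∑ b' : P a, p ⟨a, b'⟩) / (Fintype.card (P a) : ℝ))))
        = (-∑ a : S, (∑ b : P a, p ⟨a, b⟩) * Real.log (∑ b : P a, p ⟨a, b⟩)) := by
  constructor
  · rw [neg_le_neg_iff, ← univ_sigma_univ, sum_sigma, sum_sigma]
    exact sum_le_sum fun a _ => sum_mul_log_sum_div_card_le fun b => hp0 ⟨a, b⟩
  · simp only [sum_const_sum_div_card]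

/-- Row-averaging increases entropy and preserves row-entropy: for a probability vector `p`
on `Q = Σ a, P a`, the vector `p'` with `p' (a,b) = p_a / T_a` satisfies
`h(p') ≥ h(p)` and `h_r(p') = h_r(p)`. -/
theorem stmt4 (S : Type*) [Fintype S] [Nonempty S] (P : S → Type*) [∀ a, Fintype (P a)]
    [∀ a, Nonempty (P a)]
    (p : (Σ a : S, P a) → ℝ) (hp0 : ∀ q, 0 ≤ p q) (hp1 : ∑ q : (Σ a : S, P a), p q = 1) :
    (-∑ q : (Σ a : S, P a), p q * Real.log (p q))
        ≤ (-∑ q : (Σ a : S, P a),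
            ((∑ b : P q.1, p ⟨q.1, b⟩) / (Fintype.card (P q.1) : ℝ)) *
              Real.log ((∑ b : P q.1, p ⟨q.1, b⟩) / (Fintype.card (P q.1) : ℝ))) ∧
      (-∑ a : S,
          (∑ b : P a, ((∑ b' : P a, p ⟨a, b'⟩) / (Fintype.card (P a) : ℝ))) *
            Real.log (∑ b : P a, ((∑ b' : P a, p ⟨a, b'⟩) / (Fintype.card (P a) : ℝ))))
        = (-∑ a : S, (∑ b : P a, p ⟨a, b⟩) * Real.log (∑ b : P a, p ⟨a, b⟩)) :=
  stmt4_general S P p hp0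
end

section
/- With the Bedford-McMullen setup, for $0 \le z \le \log R$ define $\psi(z) = \max\{h(\underline{p}) : \underline{p} \in \Upsilon, \; h_r(\underline{p}) = z\}$ where $R = |S|$. Then $\psi(z) = z + \max\{\sum_{a \in S} p_a \log T_a : (p_a)_{a\in S} \text{ a probability vector on } S, \; -\sum_a p_a \log p_a = z\}$. -/
/-!
Write `m a = ∑ b, p ⟨a, b⟩` for the row sums of `p`. By concavity of `x ↦ -x log x`,
spreading the mass `m a` uniformly over row `a` maximises the entropy of that row, which is then
`-m a log m a + m a log T_a`. Hence every `p` with row entropy `z` has entropy at most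
`z + ∑ a, m a log T_a`, with equality for the row-uniform `p`, so the two suprema differ by `z`.
The right-hand supremum is attained because the row vectors of entropy `z` form a nonempty compact
set: nonempty by the intermediate value theorem on the simplex, which joins a vertex
(entropy `0`) to the uniform vector (entropy `log R`).
-/

open Real Finset

namespace Real

lemma neg_sum_mul_log {ι : Type*} [Fintype ι] (p : ι → ℝ) :
    -∑ i, p i * log (p i) = ∑ i, negMulLog (p i) := by
  simp [negMulLog_eq_neg]

lemma mul_negMulLog_div {T : ℝ} (hT : T ≠ 0) (w : ℝ) :
    T * negMulLog (w / T) = negMulLog w + w * log T := by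
  rw [div_eq_mul_inv, negMulLog_mul]
  simp only [negMulLog, log_inv]
  field_simp

variable {ι : Type*} [Fintype ι] [Nonempty ι]

lemma sum_negMulLog_div_card (w : ℝ) :
    ∑ _i : ι, negMulLog (w / Fintype.card ι) = negMulLog w + w * log (Fintype.card ι) := by
  rw [sum_const, card_univ, nsmul_eq_mul, mul_negMulLog_div (by positivity)]

lemma sum_negMulLog_le {w : ι → ℝ} (hw : ∀ i, 0 ≤ w i) :
    ∑ i, negMulLog (w i) ≤ negMulLog (∑ i, w i) + (∑ i, w i) * log (Fintype.card ι) := by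
  set T : ℝ := (Fintype.card ι : ℝ)
  have hT : 0 < T := by positivity
  have jensen := concaveOn_negMulLog.le_map_sum (t := univ) (w := fun _ ↦ T⁻¹) (p := w)
    (fun _ _ ↦ by positivity) (by simp [T]) (fun i _ ↦ Set.mem_Ici.mpr (hw i))
  simp only [smul_eq_mul] at jensen
  calc ∑ i, negMulLog (w i) = T * ∑ i, T⁻¹ * negMulLog (w i) := by
        rw [← mul_sum]; field_simp
    _ ≤ T * negMulLog (∑ i, T⁻¹ * w i) := by gcongr
    _ = _ := by rw [← mul_sum, inv_mul_eq_div, mul_negMulLog_div hT.ne']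

end Real

section Simplex

variable {ι : Type*} [Fintype ι]

lemma sum_const_div_card [Nonempty ι] (w : ℝ) : ∑ _i : ι, w / Fintype.card ι = w := by
  rw [sum_const, card_univ, nsmul_eq_mul, mul_div_cancel₀ _ (by positivity)]

lemma exists_mem_stdSimplex_sum_negMulLog_eq [Nonempty ι] {z : ℝ} (hz0 : 0 ≤ z)
    (hz1 : z ≤ log (Fintype.card ι)) :
    ∃ p ∈ stdSimplex ℝ ι, ∑ i, negMulLog (p i) = z := by
  classical
  have hvertex : ∑ i, negMulLog ((Pi.single (Classical.arbitrary ι) 1 : ι → ℝ) i) = 0 :=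
    sum_eq_zero fun i _ ↦ by
      rcases eq_or_ne i (Classical.arbitrary ι) with rfl | h <;> simp [*]
  set u : ι → ℝ := fun _ ↦ 1 / Fintype.card ι
  have huniform : ∑ i, negMulLog (u i) = log (Fintype.card ι) := by
    simpa [u] using sum_negMulLog_div_card (ι := ι) 1
  have huniform_mem : u ∈ stdSimplex ℝ ι := ⟨fun _ ↦ by positivity, sum_const_div_card 1⟩
  exact (convex_stdSimplex ℝ ι).isPreconnected.intermediate_value (single_mem_stdSimplex ℝ _)
    huniform_mem (by fun_prop) ⟨hvertex ▸ hz0, huniform ▸ hz1⟩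

lemma isCompact_stdSimplex_inter_sum_negMulLog_eq (z : ℝ) :
    IsCompact (stdSimplex ℝ ι ∩ {p | ∑ i, negMulLog (p i) = z}) :=
  (isCompact_stdSimplex ℝ ι).inter_right (isClosed_eq (by fun_prop) continuous_const)

end Simplex

section Sigma

variable {S : Type*} [Fintype S] {P : S → Type*} [∀ a, Fintype (P a)] [∀ a, Nonempty (P a)]

lemma sum_negMulLog_sigma_le {p : (Σ a, P a) → ℝ} (hp : ∀ q, 0 ≤ p q) :
    ∑ q, negMulLog (p q) ≤ ∑ a, negMulLog (∑ b, p ⟨a, b⟩) +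
      ∑ a, (∑ b, p ⟨a, b⟩) * log (Fintype.card (P a)) := by
  rw [Fintype.sum_sigma, ← sum_add_distrib]
  exact sum_le_sum fun a _ ↦ sum_negMulLog_le fun b ↦ hp ⟨a, b⟩

lemma sum_negMulLog_sigma_div_card (m : S → ℝ) :
    ∑ q : Σ a, P a, negMulLog (m q.1 / Fintype.card (P q.1)) =
      ∑ a, negMulLog (m a) + ∑ a, m a * log (Fintype.card (P a)) := by
  rw [Fintype.sum_sigma, ← sum_add_distrib]
  exact sum_congr rfl fun a _ ↦ sum_negMulLog_div_card (m a)

end Sigma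

/-- For `0 ≤ z ≤ log R`, the maximal entropy among probability vectors on `Q = Σ a, P a` with
row entropy `z` equals `z` plus the maximal value of `∑ a, p_a log T_a` among row probability
vectors with entropy `z`. -/
theorem stmt5 (S : Type*) [Fintype S] [Nonempty S] (P : S → Type*) [∀ a, Fintype (P a)]
    [∀ a, Nonempty (P a)] (z : ℝ) (hz0 : 0 ≤ z) (hz1 : z ≤ Real.log (Fintype.card S)) :
    sSup {x : ℝ | ∃ p : (Σ a : S, P a) → ℝ, (∀ q, 0 ≤ p q) ∧ (∑ q : (Σ a : S, P a), p q) = 1 ∧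
        (-∑ a : S, (∑ b : P a, p ⟨a, b⟩) * Real.log (∑ b : P a, p ⟨a, b⟩)) = z ∧
        x = -∑ q : (Σ a : S, P a), p q * Real.log (p q)} =
      z + sSup {x : ℝ | ∃ p : S → ℝ, (∀ a, 0 ≤ p a) ∧ (∑ a : S, p a) = 1 ∧
        (-∑ a : S, p a * Real.log (p a)) = z ∧
        x = ∑ a : S, p a * Real.log (Fintype.card (P a) : ℝ)} := by
  simp only [neg_sum_mul_log]
  set g : (S → ℝ) → ℝ := fun m ↦ ∑ a, m a * log (Fintype.card (P a))
  obtain ⟨m, ⟨⟨hm0, hm1⟩, hmz⟩, hmax⟩ :=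
    (isCompact_stdSimplex_inter_sum_negMulLog_eq z).exists_isMaxOn
      (exists_mem_stdSimplex_sum_negMulLog_eq hz0 hz1) (by fun_prop : Continuous g).continuousOn
  rw [IsGreatest.csSup_eq (a := z + g m), IsGreatest.csSup_eq (a := g m)]
  · refine ⟨⟨m, hm0, hm1, hmz, rfl⟩, ?_⟩
    rintro _ ⟨p, hp0, hp1, hpz, rfl⟩
    exact hmax ⟨⟨hp0, hp1⟩, hpz⟩
  refine ⟨⟨fun q ↦ m q.1 / Fintype.card (P q.1),
    fun q ↦ div_nonneg (hm0 q.1) (Nat.cast_nonneg _), ?_, ?_, ?_⟩, ?_⟩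
  · simpa only [Fintype.sum_sigma, sum_const_div_card] using hm1
  · simpa only [sum_const_div_card] using hmz.out
  · rw [sum_negMulLog_sigma_div_card, hmz]
  · rintro _ ⟨p, hp0, hp1, hpz, rfl⟩
    have hrows : (fun a ↦ ∑ b, p ⟨a, b⟩) ∈ stdSimplex ℝ S :=
      ⟨fun a ↦ sum_nonneg fun b _ ↦ hp0 ⟨a, b⟩, by rwa [← Fintype.sum_sigma]⟩
    calc ∑ q, negMulLog (p q) ≤ z + g fun a ↦ ∑ b, p ⟨a, b⟩ :=
          hpz ▸ sum_negMulLog_sigma_le hp0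
      _ ≤ z + g m := by gcongr; exact hmax ⟨hrows, hpz⟩
end

section
/- Let $S$ be a finite set with $|S| = R \ge 2$ and weights $T_a \ge 1$ for $a \in S$, not all $T_a$ equal. For $z \in [0, \log R]$ define $g(z) = \max\{\sum_{a\in S} p_a \log T_a : (p_a) \text{ probability vector on } S, -\sum_a p_a \log p_a = z\}$. Then $g(z) = \max\{\sum_{a\in S} p_a \log T_a : (p_a) \text{ probability vector on } S, -\sum_a p_a \log p_a \geq z\}$, i.e. the constrained maximum over the equality set equals the maximum over the superlevel set. -/
/-!
Let `b` maximise `log T`. Moving a probability vector `p` along the segment towards the point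
mass at `b` never decreases `∑ p_a log T_a`, while its entropy varies continuously from `H(p)` down
to `0`. So whenever `z ≤ H(p)`, the intermediate value theorem gives a point `q` of the segment with
`H(q) = z` doing at least as well as `p`: every value attained on the superlevel set is dominated
by one attained on the level set.
-/

open Real Finset

section

variable {S : Type*} [Fintype S]

lemma sum_mul_le_of_mem_stdSimplex {p : S → ℝ} (hp : p ∈ stdSimplex ℝ S) {w : S → ℝ} {b : S}
    (hb : ∀ a, w a ≤ w b) : ∑ a, p a * w a ≤ w b :=
  calc ∑ a, p a * w a ≤ ∑ a, p a * w b :=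
        sum_le_sum fun a _ => mul_le_mul_of_nonneg_left (hb a) (hp.1 a)
    _ = w b := by rw [← sum_mul, hp.2, one_mul]

lemma sum_negMulLog_single (b : S) [DecidableEq S] :
    ∑ a, negMulLog ((Pi.single b 1 : S → ℝ) a) = 0 := by
  rw [Fintype.sum_eq_single b fun a ha => by simp [ha]]
  simp

lemma sum_negMulLog_eq_neg_sum_mul_log (p : S → ℝ) :
    ∑ a, negMulLog (p a) = -∑ a, p a * log (p a) := by
  simp only [negMulLog, neg_mul, sum_neg_distrib]

lemma exists_mem_stdSimplex_sum_negMulLog_eq_and_sum_mul_le {p : S → ℝ}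
    (hp : p ∈ stdSimplex ℝ S) (w : S → ℝ) {z : ℝ} (hz0 : 0 ≤ z)
    (hz : z ≤ ∑ a, negMulLog (p a)) :
    ∃ q ∈ stdSimplex ℝ S, ∑ a, negMulLog (q a) = z ∧ ∑ a, p a * w a ≤ ∑ a, q a * w a := by
  classical
  have : Nonempty S :=
    (isEmpty_or_nonempty S).resolve_left fun _ => by simp [stdSimplex_of_isEmpty_index] at hp
  obtain ⟨b, hb⟩ := Finite.exists_max w
  set δ : S → ℝ := Pi.single b 1
  obtain ⟨q, hq, hqz⟩ := (convex_segment δ p).isPreconnected.intermediate_value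
    (left_mem_segment ℝ δ p) (right_mem_segment ℝ δ p)
    (by fun_prop : Continuous fun q : S → ℝ => ∑ a, negMulLog (q a)).continuousOn
    ⟨(sum_negMulLog_single b).symm ▸ hz0, hz⟩
  refine ⟨q, (convex_stdSimplex ℝ S).segment_subset (single_mem_stdSimplex ℝ b) hp hq, hqz, ?_⟩
  obtain ⟨s, t, hs, ht, hst, rfl⟩ := hq
  have hδw : ∑ a, δ a * w a = w b := by
    rw [Fintype.sum_eq_single b fun a ha => by simp [δ, ha]]
    simp [δ]
  have hpw := sum_mul_le_of_mem_stdSimplex hp hb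
  calc ∑ a, p a * w a = s * ∑ a, p a * w a + t * ∑ a, p a * w a := by rw [← add_mul, hst, one_mul]
    _ ≤ s * ∑ a, δ a * w a + t * ∑ a, p a * w a := by rw [hδw]; gcongr
    _ = ∑ a, (s • δ + t • p) a * w a := by
        simp only [Pi.add_apply, Pi.smul_apply, smul_eq_mul, add_mul, sum_add_distrib, mul_sum,
          mul_assoc]

end

theorem stmt6_general (S : Type*) [Fintype S] (T : S → ℝ)
    (z : ℝ) (hz0 : 0 ≤ z) :
    sSup {x : ℝ | ∃ p : S → ℝ, (∀ a, 0 ≤ p a) ∧ (∑ a : S, p a) = 1 ∧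
        (-∑ a : S, p a * Real.log (p a)) = z ∧ x = ∑ a : S, p a * Real.log (T a)} =
      sSup {x : ℝ | ∃ p : S → ℝ, (∀ a, 0 ≤ p a) ∧ (∑ a : S, p a) = 1 ∧
        z ≤ (-∑ a : S, p a * Real.log (p a)) ∧ x = ∑ a : S, p a * Real.log (T a)} := by
  simp_rw [← sum_negMulLog_eq_neg_sum_mul_log]
  apply csSup_eq_csSup_of_forall_exists_le
  · rintro x ⟨p, hp0, hp1, hpz, rfl⟩
    exact ⟨_, ⟨p, hp0, hp1, hpz.ge, rfl⟩, le_rfl⟩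
  · rintro x ⟨p, hp0, hp1, hpz, rfl⟩
    obtain ⟨q, ⟨hq0, hq1⟩, hqz, hle⟩ :=
      exists_mem_stdSimplex_sum_negMulLog_eq_and_sum_mul_le ⟨hp0, hp1⟩ (fun a => log (T a)) hz0 hpz
    exact ⟨_, ⟨q, hq0, hq1, hqz, rfl⟩, hle⟩

/-- The maximum of `∑ p_a log T_a` over probability vectors with entropy exactly `z`
equals the maximum over probability vectors with entropy at least `z`. -/
theorem stmt6 (S : Type*) [Fintype S] (hR : 2 ≤ Fintype.card S) (T : S → ℝ)
    (hT1 : ∀ a, 1 ≤ T a) (hTne : ∃ a b : S, T a ≠ T b)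
    (z : ℝ) (hz0 : 0 ≤ z) (hz1 : z ≤ Real.log (Fintype.card S)) :
    sSup {x : ℝ | ∃ p : S → ℝ, (∀ a, 0 ≤ p a) ∧ (∑ a : S, p a) = 1 ∧
        (-∑ a : S, p a * Real.log (p a)) = z ∧ x = ∑ a : S, p a * Real.log (T a)} =
      sSup {x : ℝ | ∃ p : S → ℝ, (∀ a, 0 ≤ p a) ∧ (∑ a : S, p a) = 1 ∧
        z ≤ (-∑ a : S, p a * Real.log (p a)) ∧ x = ∑ a : S, p a * Real.log (T a)} :=
  stmt6_general S T z hz0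
end

section
/- With the Bedford-McMullen setup, the function $\psi : [h_r(\underline{p}_D), \log R] \to \mathbb{R}$, $\psi(z) = \max\{h(\underline{p}) : h_r(\underline{p}) = z\}$, is concave. -/
/-!
Entropy `h` and row entropy `h_r` are both concave on the simplex, and `h` is maximal at the
uniform vector `p_D`. Given feasible `p₁`, `p₂` with `h_r(pᵢ) = zᵢ`, the combination
`p = a p₁ + b p₂` has `h(p) ≥ a h(p₁) + b h(p₂)` and `h_r(p) ≥ a z₁ + b z₂ ≥ h_r(p_D)`.
Sliding `p` towards `p_D` does not decrease `h` and, by the intermediate value theorem, reaches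
a point with row entropy exactly `a z₁ + b z₂`. Taking suprema gives concavity of `ψ`.
-/

open Real Set

lemma mul_csSup_add_mul_csSup_le {A B : Set ℝ} (hA : A.Nonempty) (hA' : BddAbove A)
    (hB : B.Nonempty) (hB' : BddAbove B) {a b c : ℝ} (ha : 0 ≤ a) (hb : 0 ≤ b)
    (h : ∀ x ∈ A, ∀ y ∈ B, a * x + b * y ≤ c) :
    a * sSup A + b * sSup B ≤ c := by
  rw [← smul_eq_mul, ← smul_eq_mul, ← Real.sSup_smul_of_nonneg ha,
    ← Real.sSup_smul_of_nonneg hb, ← csSup_add (hA.smul_set) (hA'.smul_of_nonneg ha)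
      (hB.smul_set) (hB'.smul_of_nonneg hb)]
  refine csSup_le (hA.smul_set.add hB.smul_set) ?_
  rintro _ ⟨_, ⟨x, hx, rfl⟩, _, ⟨y, hy, rfl⟩, rfl⟩
  exact h x hx y hy

section FiberSup

variable {E : Type*} [AddCommGroup E] [Module ℝ E] [TopologicalSpace E] [ContinuousAdd E]
  [ContinuousSMul ℝ E] {K : Set E} {f g : E → ℝ} {u p : E}

theorem ConcaveOn.exists_apply_eq_and_le_of_isMaxOn (hf : ConcaveOn ℝ K f)
    (hg : ContinuousOn g K) (hu : u ∈ K) (hmax : IsMaxOn f K u) (hp : p ∈ K) {z : ℝ}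
    (hz : z ∈ Icc (g u) (g p)) : ∃ q ∈ K, g q = z ∧ f p ≤ f q := by
  have hseg : MapsTo (fun t : ℝ => (1 - t) • p + t • u) (Icc 0 1) K :=
    fun t ht => hf.1 hp hu (by linarith [ht.2]) ht.1 (by ring)
  have hcont : ContinuousOn (fun t : ℝ => g ((1 - t) • p + t • u)) (Icc 0 1) :=
    hg.comp (by fun_prop) hseg
  obtain ⟨t, ht, hgt⟩ := intermediate_value_Icc' zero_le_one hcont (by simpa using hz)
  refine ⟨_, hseg ht, hgt, ?_⟩
  calc f p = (1 - t) * f p + t * f p := by ring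
    _ ≤ (1 - t) * f p + t * f u := by gcongr; exacts [ht.1, isMaxOn_iff.1 hmax p hp]
    _ ≤ f ((1 - t) • p + t • u) := hf.2 hp hu (by linarith [ht.2]) ht.1 (by ring)

theorem ConcaveOn.concaveOn_sSup_image_fiber (hf : ConcaveOn ℝ K f) (hg : ConcaveOn ℝ K g)
    (hgc : ContinuousOn g K) (hu : u ∈ K) (hmax : IsMaxOn f K u) {v : E} (hv : v ∈ K) :
    ConcaveOn ℝ (Icc (g u) (g v)) fun z => sSup (f '' {p ∈ K | g p = z}) := by
  have hbdd : ∀ z, BddAbove (f '' {p ∈ K | g p = z}) := fun z =>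
    ⟨f u, by rintro _ ⟨p, ⟨hp, -⟩, rfl⟩; exact isMaxOn_iff.1 hmax p hp⟩
  have hne : ∀ z ∈ Icc (g u) (g v), (f '' {p ∈ K | g p = z}).Nonempty := fun z hz => by
    obtain ⟨q, hq, hgq, -⟩ := hf.exists_apply_eq_and_le_of_isMaxOn hgc hu hmax hv hz
    exact ⟨f q, q, ⟨hq, hgq⟩, rfl⟩
  refine ⟨convex_Icc _ _, fun z₁ hz₁ z₂ hz₂ a b ha hb hab => ?_⟩
  refine mul_csSup_add_mul_csSup_le (hne z₁ hz₁) (hbdd _) (hne z₂ hz₂) (hbdd _) ha hb ?_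
  rintro _ ⟨p₁, ⟨hp₁, rfl⟩, rfl⟩ _ ⟨p₂, ⟨hp₂, rfl⟩, rfl⟩
  have hp : a • p₁ + b • p₂ ∈ K := hf.1 hp₁ hp₂ ha hb hab
  obtain ⟨q, hq, hgq, hfq⟩ := hf.exists_apply_eq_and_le_of_isMaxOn hgc hu hmax hp
    ⟨(convex_Ici (g u)) hz₁.1 hz₂.1 ha hb hab, hg.2 hp₁ hp₂ ha hb hab⟩
  calc a * f p₁ + b * f p₂ ≤ f (a • p₁ + b • p₂) := hf.2 hp₁ hp₂ ha hb hab
    _ ≤ f q := hfq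
    _ ≤ _ := le_csSup (hbdd _) ⟨q, ⟨hq, hgq⟩, rfl⟩

end FiberSup

section Entropy

variable {ι : Type*} [Fintype ι]

noncomputable def entropy (p : ι → ℝ) : ℝ :=
  ∑ i, negMulLog (p i)

lemma entropy_eq_neg_sum (p : ι → ℝ) : entropy p = -∑ i, p i * log (p i) := by
  simp [entropy, negMulLog, Finset.sum_neg_distrib]

theorem concaveOn_entropy : ConcaveOn ℝ (Ici 0) (entropy (ι := ι)) := by
  refine ⟨convex_Ici 0, fun p hp q hq a b ha hb hab => ?_⟩
  simp only [entropy, smul_eq_mul, Finset.mul_sum, ← Finset.sum_add_distrib]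
  exact Finset.sum_le_sum fun i _ => concaveOn_negMulLog.2 (hp i) (hq i) ha hb hab

theorem continuous_entropy : Continuous (entropy (ι := ι)) := by
  unfold entropy
  fun_prop

variable [Nonempty ι]

lemma entropy_uniform :
    entropy (fun _ : ι => (Fintype.card ι : ℝ)⁻¹) = log (Fintype.card ι) := by
  have : (Fintype.card ι : ℝ) ≠ 0 := by positivity
  simp [entropy, negMulLog, Real.log_inv, this]

lemma uniform_mem_stdSimplex : (fun _ : ι => (Fintype.card ι : ℝ)⁻¹) ∈ stdSimplex ℝ ι := by
  have : (Fintype.card ι : ℝ) ≠ 0 := by positivity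
  exact ⟨fun _ => by positivity, by simp [this]⟩

/-- Jensen's inequality for `negMulLog` with uniform weights. -/
theorem isMaxOn_entropy_uniform :
    IsMaxOn entropy (stdSimplex ℝ ι) fun _ : ι => (Fintype.card ι : ℝ)⁻¹ := by
  refine isMaxOn_iff.2 fun p hp => ?_
  have hn : (0 : ℝ) < Fintype.card ι := by positivity
  have hJ := concaveOn_negMulLog.le_map_sum (t := Finset.univ) (w := fun _ => (Fintype.card ι : ℝ)⁻¹)
    (fun _ _ => by positivity) (by simp [hn.ne']) fun i _ => hp.1 i
  rw [← Finset.smul_sum, ← Finset.smul_sum, hp.2, smul_eq_mul, smul_eq_mul, mul_one] at hJ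
  rw [negMulLog, Real.log_inv, mul_neg, neg_mul, neg_neg] at hJ
  rw [entropy_uniform]
  exact (mul_le_mul_iff_right₀ (inv_pos.2 hn)).1 hJ

end Entropy

section RowEntropy

variable {S : Type*} {P : S → Type*} [∀ a, Fintype (P a)]

def marginal : ((Σ a, P a) → ℝ) →ₗ[ℝ] S → ℝ where
  toFun p a := ∑ b, p ⟨a, b⟩
  map_add' p q := by ext a; simp [Finset.sum_add_distrib]
  map_smul' c p := by ext a; simp [Finset.mul_sum]

lemma marginal_apply (p : (Σ a, P a) → ℝ) (a : S) : marginal p a = ∑ b, p ⟨a, b⟩ := rfl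

variable [Fintype S]

lemma sum_marginal (p : (Σ a, P a) → ℝ) : ∑ a, marginal p a = ∑ q, p q :=
  (Fintype.sum_sigma p).symm

noncomputable def rowEntropy (p : (Σ a, P a) → ℝ) : ℝ :=
  entropy (marginal p)

theorem concaveOn_rowEntropy : ConcaveOn ℝ (Ici 0) (rowEntropy (P := P)) :=
  (concaveOn_entropy.comp_linearMap marginal).subset
    (fun _ hp a => Finset.sum_nonneg fun b _ => hp ⟨a, b⟩) (convex_Ici 0)

theorem continuous_rowEntropy : Continuous (rowEntropy (P := P)) :=
  continuous_entropy.comp marginal.continuous_of_finiteDimensional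

lemma marginal_uniform :
    marginal (fun _ : Σ a, P a => (Fintype.card (Σ a, P a) : ℝ)⁻¹) =
      fun a => (Fintype.card (P a) : ℝ) / Fintype.card (Σ a, P a) := by
  ext a
  simp [marginal_apply, div_eq_mul_inv]

lemma exists_mem_stdSimplex_rowEntropy_eq [Nonempty S] [∀ a, Nonempty (P a)] :
    ∃ v ∈ stdSimplex ℝ (Σ a, P a), rowEntropy v = log (Fintype.card S) := by
  have hv : marginal (fun q : Σ a, P a => ((Fintype.card S : ℝ) * Fintype.card (P q.1))⁻¹) =
      fun _ => (Fintype.card S : ℝ)⁻¹ := by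
    ext a
    have : (Fintype.card (P a) : ℝ) ≠ 0 := by positivity
    change ∑ _ : P a, ((Fintype.card S : ℝ) * Fintype.card (P a))⁻¹ = _
    simp [this]
  refine ⟨_, ⟨fun _ => ?_, ?_⟩, by rw [rowEntropy, hv, entropy_uniform]⟩
  · positivity
  · rw [← sum_marginal, hv]
    exact uniform_mem_stdSimplex.2

end RowEntropy

/-- The function `ψ(z) = max { h(p) : h_r(p) = z }` is concave on `[h_r(p_D), log R]`. -/
theorem stmt7 (S : Type*) [Fintype S] [Nonempty S] (P : S → Type*) [∀ a, Fintype (P a)]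
    [∀ a, Nonempty (P a)] :
    ConcaveOn ℝ
      (Set.Icc
        (-∑ a : S, ((Fintype.card (P a) : ℝ) / (Fintype.card (Σ a' : S, P a') : ℝ)) *
            Real.log ((Fintype.card (P a) : ℝ) / (Fintype.card (Σ a' : S, P a') : ℝ)))
        (Real.log (Fintype.card S)))
      (fun z : ℝ =>
        sSup {x : ℝ | ∃ p : (Σ a : S, P a) → ℝ, (∀ q, 0 ≤ p q) ∧
          (∑ q : (Σ a : S, P a), p q) = 1 ∧
          (-∑ a : S, (∑ b : P a, p ⟨a, b⟩) * Real.log (∑ b : P a, p ⟨a, b⟩)) = z ∧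
          x = -∑ q : (Σ a : S, P a), p q * Real.log (p q)}) := by
  have : Nonempty (Σ a, P a) := ⟨⟨Classical.arbitrary S, Classical.arbitrary _⟩⟩
  have hsub : stdSimplex ℝ (Σ a, P a) ⊆ Ici 0 := fun _ hp => hp.1
  obtain ⟨v, hv, hv_row⟩ := exists_mem_stdSimplex_rowEntropy_eq (P := P)
  have hψ := (concaveOn_entropy.subset hsub (convex_stdSimplex ℝ _)).concaveOn_sSup_image_fiber
    (concaveOn_rowEntropy.subset hsub (convex_stdSimplex ℝ _)) continuous_rowEntropy.continuousOn
    uniform_mem_stdSimplex isMaxOn_entropy_uniform hv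
  rw [hv_row, rowEntropy, marginal_uniform, entropy_eq_neg_sum] at hψ
  convert hψ using 4 with z
  ext x
  simp only [rowEntropy, entropy_eq_neg_sum, marginal_apply, stdSimplex, Set.mem_image,
    Set.mem_ofPred_eq, and_assoc, eq_comm]
end

section
/- Let $(m_k)_{k\geq 1}$ be a sequence of positive integers with $\sum_{k=1}^{\infty} m_k^{-1} < \infty$, and let $(\underline{p}^{(k)})$ be probability vectors on a finite set $Q$. Let $\mu = \prod_{\ell=1}^\infty \eta_\ell$ on $Q^{\mathbb{N}}$ where $\eta_\ell = \underline{p}^{(k)}$ for $\ell \in (S_{k-1}, S_k]$, $S_k = \sum_{q\le k} m_q$. Then for $\mu$-almost every $\mathbf{i} = (i_1, i_2, \dots)$, for every sufficiently small $\varepsilon > 0$ there exists $K$ such that for every $k \geq K$, every $m$ with $\varepsilon m_{k-1} < m \le m_k$, and every $j \in Q$: $\left|\frac{\#\{\ell \in (S_{k-1}, S_{k-1}+m] : i_\ell = j\}}{m} - p_j^{(k)}\right| < \varepsilon$. -/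
open MeasureTheory Finset


theorem expSum {Q : Type*} [Fintype Q] [DecidableEq Q] (n : ℕ) (g : Fin n → Q → ℝ) :
    ∑ f : Fin n → Q, ∏ i, g i (f i) = ∏ i, ∑ q, g i q := by
  rw [Finset.prod_univ_sum]
  simp [Fintype.piFinset_univ]

theorem sum_pow_four {ι : Type*} (s : Finset ι) (h : ι → ℝ) (W : ℝ) :
    (∑ i ∈ s, h i)^4 * W
      = ∑ a ∈ s, ∑ b ∈ s, ∑ c ∈ s, ∑ d ∈ s, h a * (h b * (h c * (h d * W))) := by
  rw [show (∑ i ∈ s, h i)^4 * W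
      = (∑ a ∈ s, h a) * ((∑ b ∈ s, h b) * ((∑ c ∈ s, h c) * ((∑ d ∈ s, h d) * W)))
      from by ring]
  simp only [Finset.sum_mul, Finset.mul_sum]
  refine Finset.sum_congr rfl fun a _ => Finset.sum_congr rfl fun b _ =>
    Finset.sum_congr rfl fun c _ => Finset.sum_congr rfl fun d _ => by ring

theorem prod_pow_single {n : ℕ} (a : Fin n) (v : Fin n → ℝ) :
    ∏ i, v i ^ (if a = i then 1 else 0) = v a := by
  rw [Finset.prod_eq_single a (fun i _ hi => by rw [if_neg (fun h => hi h.symm), pow_zero])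
    (fun h => absurd (Finset.mem_univ a) h)]
  rw [if_pos rfl, pow_one]

theorem two_values {α : Type*} (a b c d : α) (ha : a = b ∨ a = c ∨ a = d)
    (hb : b = a ∨ b = c ∨ b = d) (hc : c = a ∨ c = b ∨ c = d) :
    ∃ u v, (u = a ∨ u = b ∨ u = c ∨ u = d) ∧ (v = a ∨ v = b ∨ v = c ∨ v = d) ∧
      (a = u ∨ a = v) ∧ (b = u ∨ b = v) ∧ (c = u ∨ c = v) ∧ (d = u ∨ d = v) := by
  rcases ha with h | h | h
  · rcases hc with h' | h' | h'
    · exact ⟨a, d, Or.inl rfl, Or.inr (Or.inr (Or.inr rfl)), Or.inl rfl, Or.inl h.symm,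
        Or.inl h', Or.inr rfl⟩
    · exact ⟨a, d, Or.inl rfl, Or.inr (Or.inr (Or.inr rfl)), Or.inl rfl, Or.inl h.symm,
        Or.inl (h'.trans h.symm), Or.inr rfl⟩
    · exact ⟨a, c, Or.inl rfl, Or.inr (Or.inr (Or.inl rfl)), Or.inl rfl, Or.inl h.symm,
        Or.inr rfl, Or.inr h'.symm⟩
  · rcases hb with h' | h' | h'
    · exact ⟨a, d, Or.inl rfl, Or.inr (Or.inr (Or.inr rfl)), Or.inl rfl, Or.inl h',
        Or.inl h.symm, Or.inr rfl⟩
    · exact ⟨a, d, Or.inl rfl, Or.inr (Or.inr (Or.inr rfl)), Or.inl rfl,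
        Or.inl (h'.trans h.symm), Or.inl h.symm, Or.inr rfl⟩
    · exact ⟨a, b, Or.inl rfl, Or.inr (Or.inl rfl), Or.inl rfl, Or.inr rfl,
        Or.inl h.symm, Or.inr h'.symm⟩
  · rcases hb with h' | h' | h'
    · exact ⟨a, c, Or.inl rfl, Or.inr (Or.inr (Or.inl rfl)), Or.inl rfl, Or.inl h',
        Or.inr rfl, Or.inl h.symm⟩
    · exact ⟨a, b, Or.inl rfl, Or.inr (Or.inl rfl), Or.inl rfl, Or.inr rfl,
        Or.inr h'.symm, Or.inl h.symm⟩
    · exact ⟨a, c, Or.inl rfl, Or.inr (Or.inr (Or.inl rfl)), Or.inl rfl,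
        Or.inl (h'.trans h.symm), Or.inr rfl, Or.inl h.symm⟩

theorem moment {Q : Type*} [Fintype Q] [DecidableEq Q] {n : ℕ}
    (P : Fin n → Q → ℝ) (hP0 : ∀ i q, 0 ≤ P i q) (hP1 : ∀ i, ∑ q, P i q = 1)
    (χ : Q → ℝ) (hχ : ∀ q, |χ q| ≤ 1) (blk : Finset (Fin n))
    (hz : ∀ i ∈ blk, ∑ q, χ q * P i q = 0) :
    ∑ f : Fin n → Q, (∑ i ∈ blk, χ (f i))^4 * ∏ i, P i (f i)
      ≤ 16 * (blk.card : ℝ)^2 := by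
  classical
  set e : Fin n → Fin n → Fin n → Fin n → Fin n → ℕ := fun a b c d i =>
    (if a = i then 1 else 0) + (if b = i then 1 else 0) + (if c = i then 1 else 0)
      + (if d = i then 1 else 0) with he
  set T : Fin n → Fin n → Fin n → Fin n → ℝ := fun a b c d =>
    ∏ i, ∑ q, (χ q) ^ (e a b c d i) * P i q with hT
  -- step 1: expansion
  have expand : ∑ f : Fin n → Q, (∑ i ∈ blk, χ (f i))^4 * ∏ i, P i (f i)
      = ∑ a ∈ blk, ∑ b ∈ blk, ∑ c ∈ blk, ∑ d ∈ blk, T a b c d := by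
    have h1 : ∀ f : Fin n → Q, (∑ i ∈ blk, χ (f i))^4 * ∏ i, P i (f i)
        = ∑ a ∈ blk, ∑ b ∈ blk, ∑ c ∈ blk, ∑ d ∈ blk,
          χ (f a) * (χ (f b) * (χ (f c) * (χ (f d) * ∏ i, P i (f i)))) :=
      fun f => sum_pow_four blk (fun i => χ (f i)) _
    rw [Finset.sum_congr rfl fun f _ => h1 f]
    rw [Finset.sum_comm]
    refine Finset.sum_congr rfl fun a _ => ?_
    rw [Finset.sum_comm]
    refine Finset.sum_congr rfl fun b _ => ?_
    rw [Finset.sum_comm]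
    refine Finset.sum_congr rfl fun c _ => ?_
    rw [Finset.sum_comm]
    refine Finset.sum_congr rfl fun d _ => ?_
    -- ∑ f, χ (f a) * (χ (f b) * (χ (f c) * (χ (f d) * ∏ i, P i (f i)))) = T a b c d
    have h2 : ∀ f : Fin n → Q,
        χ (f a) * (χ (f b) * (χ (f c) * (χ (f d) * ∏ i, P i (f i))))
          = ∏ i, ((χ (f i)) ^ (e a b c d i) * P i (f i)) := by
      intro f
      rw [Finset.prod_mul_distrib]
      have h3 : ∏ i, (χ (f i)) ^ (e a b c d i)
          = χ (f a) * χ (f b) * χ (f c) * χ (f d) := by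
        simp only [he, pow_add]
        rw [Finset.prod_mul_distrib, Finset.prod_mul_distrib, Finset.prod_mul_distrib]
        rw [prod_pow_single a, prod_pow_single b, prod_pow_single c, prod_pow_single d]
      rw [h3]; ring
    rw [Finset.sum_congr rfl fun f _ => h2 f]
    exact expSum n (fun i q => χ q ^ e a b c d i * P i q)
  rw [expand]
  -- vanishing terms
  have hT0 : ∀ a b c d i₀, i₀ ∈ blk → e a b c d i₀ = 1 → T a b c d = 0 := by
    intro a b c d i₀ hi₀ hei
    refine Finset.prod_eq_zero (Finset.mem_univ i₀) ?_
    simp only [hei, pow_one]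
    exact hz i₀ hi₀
  -- |T| ≤ 1
  have hT1 : ∀ a b c d : Fin n, |T a b c d| ≤ 1 := by
    intro a b c d
    rw [hT, Finset.abs_prod]
    refine Finset.prod_le_one (fun i _ => abs_nonneg _) (fun i _ => ?_)
    calc |∑ q, (χ q) ^ (e a b c d i) * P i q| ≤ ∑ q, |(χ q) ^ (e a b c d i) * P i q| :=
          Finset.abs_sum_le_sum_abs _ _
      _ ≤ ∑ q, P i q := by
          refine Finset.sum_le_sum fun q _ => ?_
          rw [abs_mul, abs_pow, abs_of_nonneg (hP0 i q)]
          calc |χ q| ^ (e a b c d i) * P i q ≤ 1 * P i q := by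
                refine mul_le_mul_of_nonneg_right ?_ (hP0 i q)
                exact pow_le_one₀ (abs_nonneg _) (hχ q)
            _ = P i q := one_mul _
      _ = 1 := hP1 i
  -- counting
  set U : Finset (Fin n × Fin n × Fin n × Fin n) := blk ×ˢ blk ×ˢ blk ×ˢ blk with hU
  have hprod : ∑ a ∈ blk, ∑ b ∈ blk, ∑ c ∈ blk, ∑ d ∈ blk, T a b c d
      = ∑ t ∈ U, T t.1 t.2.1 t.2.2.1 t.2.2.2 := by
    rw [hU]; simp only [Finset.sum_product]
  rw [hprod]
  set Bad : Fin n × Fin n × Fin n × Fin n → Prop := fun t =>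
    (t.1 = t.2.1 ∨ t.1 = t.2.2.1 ∨ t.1 = t.2.2.2)
      ∧ (t.2.1 = t.1 ∨ t.2.1 = t.2.2.1 ∨ t.2.1 = t.2.2.2)
      ∧ (t.2.2.1 = t.1 ∨ t.2.2.1 = t.2.1 ∨ t.2.2.1 = t.2.2.2)
      ∧ (t.2.2.2 = t.1 ∨ t.2.2.2 = t.2.1 ∨ t.2.2.2 = t.2.2.1) with hBad
  have hvanish : ∀ t ∈ U.filter (fun t => ¬ Bad t), T t.1 t.2.1 t.2.2.1 t.2.2.2 = 0 := by
    intro t ht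
    rw [Finset.mem_filter] at ht
    obtain ⟨htU, hnb⟩ := ht
    obtain ⟨a, b, c, d⟩ := t
    simp only [hU, Finset.mem_product] at htU
    obtain ⟨hba, hbb, hbc, hbd⟩ : a ∈ blk ∧ b ∈ blk ∧ c ∈ blk ∧ d ∈ blk := by
      exact ⟨htU.1, htU.2.1, htU.2.2.1, htU.2.2.2⟩
    simp only [hBad, not_and_or, not_or] at hnb
    rcases hnb with ⟨h1, h2, h3⟩ | ⟨h1, h2, h3⟩ | ⟨h1, h2, h3⟩ | ⟨h1, h2, h3⟩
    · refine hT0 a b c d a hba ?_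
      have n1 : ¬ b = a := fun h => h1 h.symm
      have n2 : ¬ c = a := fun h => h2 h.symm
      have n3 : ¬ d = a := fun h => h3 h.symm
      simp [he, n1, n2, n3]
    · refine hT0 a b c d b hbb ?_
      have n1 : ¬ a = b := fun h => h1 h.symm
      have n2 : ¬ c = b := fun h => h2 h.symm
      have n3 : ¬ d = b := fun h => h3 h.symm
      simp [he, n1, n2, n3]
    · refine hT0 a b c d c hbc ?_
      have n1 : ¬ a = c := fun h => h1 h.symm
      have n2 : ¬ b = c := fun h => h2 h.symm
      have n3 : ¬ d = c := fun h => h3 h.symm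
      simp [he, n1, n2, n3]
    · refine hT0 a b c d d hbd ?_
      have n1 : ¬ a = d := fun h => h1 h.symm
      have n2 : ¬ b = d := fun h => h2 h.symm
      have n3 : ¬ c = d := fun h => h3 h.symm
      simp [he, n1, n2, n3]
  have hsplit := Finset.sum_filter_add_sum_filter_not U Bad
    (fun t => T t.1 t.2.1 t.2.2.1 t.2.2.2)
  -- card bound
  set φ : (Fin n × Fin n) × (Bool × Bool × Bool × Bool) → Fin n × Fin n × Fin n × Fin n :=
    fun w => (cond w.2.1 w.1.1 w.1.2, cond w.2.2.1 w.1.1 w.1.2,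
      cond w.2.2.2.1 w.1.1 w.1.2, cond w.2.2.2.2 w.1.1 w.1.2) with hφ
  have hsub : U.filter Bad ⊆ Finset.image φ
      ((blk ×ˢ blk) ×ˢ (Finset.univ : Finset (Bool × Bool × Bool × Bool))) := by
    intro t ht
    rw [Finset.mem_filter] at ht
    obtain ⟨htU, hb⟩ := ht
    obtain ⟨a, b, c, d⟩ := t
    simp only [hU, Finset.mem_product] at htU
    obtain ⟨hba, hbb, hbc, hbd⟩ : a ∈ blk ∧ b ∈ blk ∧ c ∈ blk ∧ d ∈ blk :=
      ⟨htU.1, htU.2.1, htU.2.2.1, htU.2.2.2⟩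
    obtain ⟨hb1, hb2, hb3, _⟩ := hb
    obtain ⟨u, v, hu, hv, cova, covb, covc, covd⟩ := two_values a b c d hb1 hb2 hb3
    have hublk : u ∈ blk := by rcases hu with rfl | rfl | rfl | rfl <;> assumption
    have hvblk : v ∈ blk := by rcases hv with rfl | rfl | rfl | rfl <;> assumption
    have hsel : ∀ (w : Fin n), (w = u ∨ w = v) → cond (decide (w = u)) u v = w := by
      intro w hw
      by_cases h : w = u
      · simp [h]
      · simp only [h, decide_eq_true_eq, decide_eq_false_iff_not, not_false_iff]
        simp [h]
        exact (hw.resolve_left h).symm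
    refine Finset.mem_image.mpr
      ⟨((u, v), (decide (a = u), decide (b = u), decide (c = u), decide (d = u))), ?_, ?_⟩
    · simp [Finset.mem_product, hublk, hvblk]
    · simp only [hφ]
      rw [hsel a cova, hsel b covb, hsel c covc, hsel d covd]
  have hcard : ((U.filter Bad).card : ℝ) ≤ 16 * (blk.card : ℝ)^2 := by
    have h1 : (U.filter Bad).card ≤ blk.card * blk.card * 16 := by
      calc (U.filter Bad).card
          ≤ (Finset.image φ ((blk ×ˢ blk) ×ˢ (Finset.univ : Finset (Bool × Bool × Bool × Bool)))).card :=
            Finset.card_le_card hsub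
        _ ≤ ((blk ×ˢ blk) ×ˢ (Finset.univ : Finset (Bool × Bool × Bool × Bool))).card :=
            Finset.card_image_le
        _ = blk.card * blk.card * 16 := by
            rw [Finset.card_product, Finset.card_product]
            simp
    calc ((U.filter Bad).card : ℝ) ≤ ((blk.card * blk.card * 16 : ℕ) : ℝ) := by
          exact_mod_cast h1
      _ = 16 * (blk.card : ℝ)^2 := by push_cast; ring
  calc ∑ t ∈ U, T t.1 t.2.1 t.2.2.1 t.2.2.2
      = ∑ t ∈ U.filter Bad, T t.1 t.2.1 t.2.2.1 t.2.2.2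
        + ∑ t ∈ U.filter (fun t => ¬ Bad t), T t.1 t.2.1 t.2.2.1 t.2.2.2 := hsplit.symm
    _ = ∑ t ∈ U.filter Bad, T t.1 t.2.1 t.2.2.1 t.2.2.2 := by
        rw [Finset.sum_eq_zero hvanish, add_zero]
    _ ≤ ∑ t ∈ U.filter Bad, (1 : ℝ) := by
        refine Finset.sum_le_sum fun t _ => ?_
        exact le_trans (le_abs_self _) (hT1 t.1 t.2.1 t.2.2.1 t.2.2.2)
    _ = ((U.filter Bad).card : ℝ) := by simp
    _ ≤ 16 * (blk.card : ℝ)^2 := hcard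

theorem badsum {Q : Type*} [Fintype Q] [DecidableEq Q] {n : ℕ}
    (P : Fin n → Q → ℝ) (hP0 : ∀ i q, 0 ≤ P i q) (hP1 : ∀ i, ∑ q, P i q = 1)
    (χ : Q → ℝ) (hχ : ∀ q, |χ q| ≤ 1) (blk : Finset (Fin n))
    (hz : ∀ i ∈ blk, ∑ q, χ q * P i q = 0) (ε : ℝ) (hε : 0 < ε) (hc : 0 < blk.card)
    (bad : Finset (Fin n → Q))
    (hbad : ∀ f ∈ bad, ε * blk.card ≤ |∑ i ∈ blk, χ (f i)|) :
    ∑ f ∈ bad, ∏ i, P i (f i) ≤ 16 / (ε^4 * (blk.card : ℝ)^2) := by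
  have hcR : (0 : ℝ) < blk.card := by exact_mod_cast hc
  have hW0 : ∀ f : Fin n → Q, 0 ≤ ∏ i, P i (f i) :=
    fun f => Finset.prod_nonneg fun i _ => hP0 i (f i)
  have key : (ε * blk.card)^4 * ∑ f ∈ bad, ∏ i, P i (f i) ≤ 16 * (blk.card : ℝ)^2 := by
    rw [Finset.mul_sum]
    calc ∑ f ∈ bad, (ε * blk.card)^4 * ∏ i, P i (f i)
        ≤ ∑ f ∈ bad, (∑ i ∈ blk, χ (f i))^4 * ∏ i, P i (f i) := by
          refine Finset.sum_le_sum fun f hf => ?_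
          refine mul_le_mul_of_nonneg_right ?_ (hW0 f)
          calc (ε * blk.card)^4 ≤ |∑ i ∈ blk, χ (f i)|^4 :=
                pow_le_pow_left₀ (by positivity) (hbad f hf) 4
            _ = (∑ i ∈ blk, χ (f i))^4 := by
                rw [pow_abs, abs_of_nonneg (by positivity)]
      _ ≤ ∑ f : Fin n → Q, (∑ i ∈ blk, χ (f i))^4 * ∏ i, P i (f i) := by
          refine Finset.sum_le_sum_of_subset_of_nonneg (Finset.subset_univ bad)
            fun f _ _ => ?_
          exact mul_nonneg (by positivity) (hW0 f)
      _ ≤ 16 * (blk.card : ℝ)^2 := moment P hP0 hP1 χ hχ blk hz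
  have h4 : (0 : ℝ) < (ε * blk.card)^4 := by positivity
  have := (le_div_iff₀' h4).mpr key
  calc ∑ f ∈ bad, ∏ i, P i (f i) ≤ 16 * (blk.card : ℝ)^2 / (ε * blk.card)^4 := this
    _ = 16 / (ε^4 * (blk.card : ℝ)^2) := by
        field_simp

theorem findGreatest_block (m : ℕ → ℕ) (hm : ∀ k, 0 < m k) (S : ℕ → ℕ)
    (hS : ∀ k, S k = ∑ i ∈ Finset.range k, m i) {k ℓ : ℕ}
    (h1 : S k ≤ ℓ) (h2 : ℓ < S k + m k) :
    Nat.findGreatest (fun k' => S k' ≤ ℓ) ℓ = k := by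
  have hSmono : Monotone S := by
    intro a b hab
    rw [hS a, hS b]
    exact Finset.sum_le_sum_of_subset (Finset.range_subset_range.mpr hab)
  have hkS : k ≤ S k := by
    rw [hS k]
    calc k = ∑ _i ∈ Finset.range k, 1 := by simp
      _ ≤ ∑ i ∈ Finset.range k, m i := Finset.sum_le_sum fun i _ => hm i
  have hS1 : S (k + 1) = S k + m k := by
    rw [hS (k + 1), hS k, Finset.sum_range_succ]
  refine Nat.findGreatest_eq_iff.mpr ⟨le_trans hkS h1, fun _ => h1, fun n' hn' _ hcon => ?_⟩
  have h3 : S (k + 1) ≤ S n' := hSmono (show k + 1 ≤ n' from hn')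
  omega

theorem card_fin_filter {n a : ℕ} (pred : ℕ → Prop) [DecidablePred pred] :
    ((Finset.univ.filter (fun i : Fin n => a ≤ i.val)).filter (fun i => pred i.val)).card
      = ((Finset.Ico a n).filter (fun ℓ => pred ℓ)).card := by
  refine Finset.card_nbij (fun i => i.val) ?_ ?_ ?_
  · intro i hi
    simp only [Finset.mem_coe, Finset.coe_filter, Set.mem_setOf_eq, Finset.mem_filter, Finset.mem_univ, true_and] at hi
    simp [Finset.mem_Ico, hi.1, hi.2, i.isLt]
  · intro i _ i' _ h
    exact Fin.val_injective h
  · intro ℓ hℓ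
    simp only [Finset.coe_filter, Finset.mem_Ico, Set.mem_setOf_eq] at hℓ
    obtain ⟨⟨ha, hn⟩, hp⟩ := hℓ
    exact ⟨⟨ℓ, hn⟩, by simp [ha, hp], rfl⟩

theorem blockEvent {Q : Type*} [Fintype Q] [Nonempty Q] [DecidableEq Q] [MeasurableSpace Q]
    [MeasurableSingletonClass Q]
    (m : ℕ → ℕ) (hm : ∀ k, 0 < m k)
    (p : ℕ → Q → ℝ) (hp0 : ∀ k q, 0 ≤ p k q) (hp1 : ∀ k, ∑ q : Q, p k q = 1)
    (S : ℕ → ℕ) (hS : ∀ k, S k = ∑ i ∈ Finset.range k, m i)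
    (μ : MeasureTheory.Measure (ℕ → Q))
    (hμ : ∀ (n : ℕ) (f : ℕ → Q),
      μ {x : ℕ → Q | ∀ ℓ < n, x ℓ = f ℓ} =
        ENNReal.ofReal (∏ ℓ ∈ Finset.range n,
          p (Nat.findGreatest (fun k => S k ≤ ℓ) ℓ) (f ℓ)))
    (ε : ℝ) (hε : 0 < ε) (k mm : ℕ) (hmm0 : 0 < mm) (hmmk : mm ≤ m k) (j : Q) :
    μ {x : ℕ → Q | ¬ |(((Finset.Ico (S k) (S k + mm)).filter (fun ℓ => x ℓ = j)).card : ℝ)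
        / (mm : ℝ) - p k j| < ε} ≤ ENNReal.ofReal (16 / (ε^4 * (mm : ℝ)^2)) := by
  classical
  set n := S k + mm with hn
  set P : Fin n → Q → ℝ := fun i q => p (Nat.findGreatest (fun k' => S k' ≤ i.val) i.val) q
    with hP
  have hP0 : ∀ (i : Fin n) q, 0 ≤ P i q := fun i q => hp0 _ q
  have hP1 : ∀ i : Fin n, ∑ q, P i q = 1 := fun i => hp1 _
  set χ : Q → ℝ := fun q => (if q = j then (1 : ℝ) else 0) - p k j with hχdef
  have hpj1 : p k j ≤ 1 := by
    have h := Finset.single_le_sum (f := p k) (fun q _ => hp0 k q) (Finset.mem_univ j)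
    rw [hp1 k] at h; exact h
  have hχ : ∀ q, |χ q| ≤ 1 := by
    intro q
    simp only [hχdef]
    rw [abs_le]
    by_cases hq : q = j
    · rw [if_pos hq]
      constructor <;> linarith [hpj1, hp0 k j]
    · rw [if_neg hq]
      constructor <;> linarith [hpj1, hp0 k j]
  set blk : Finset (Fin n) := Finset.univ.filter (fun i => S k ≤ i.val) with hblk
  have hPi : ∀ i ∈ blk, P i = p k := by
    intro i hi
    rw [hblk, Finset.mem_filter] at hi
    have h2 : i.val < S k + m k := lt_of_lt_of_le i.isLt (by omega)
    simp only [hP]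
    rw [findGreatest_block m hm S hS hi.2 h2]
  have hz : ∀ i ∈ blk, ∑ q, χ q * P i q = 0 := by
    intro i hi
    rw [hPi i hi]
    simp only [hχdef, sub_mul, Finset.sum_sub_distrib]
    rw [← Finset.mul_sum, hp1 k, mul_one]
    simp only [ite_mul, one_mul, zero_mul]
    rw [Finset.sum_ite_eq' Finset.univ j (p k)]
    simp
  have hcard : blk.card = mm := by
    have h := card_fin_filter (n := n) (a := S k) (fun _ => True)
    simp only [Finset.filter_true] at h
    rw [hblk]
    rw [h, Nat.card_Ico]
    omega
  -- cylinders
  set ext : (Fin n → Q) → ℕ → Q :=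
    fun f ℓ => if h : ℓ < n then f ⟨ℓ, h⟩ else Classical.arbitrary Q with hext
  set Cyl : (Fin n → Q) → Set (ℕ → Q) := fun f => {x | ∀ ℓ < n, x ℓ = ext f ℓ} with hCyl
  have hextval : ∀ (f : Fin n → Q) (i : Fin n), ext f i.val = f i := by
    intro f i
    rw [hext]
    simp [i.isLt]
  have hmeas : ∀ f, MeasurableSet (Cyl f) := by
    intro f
    have hrw : Cyl f = ⋂ ℓ ∈ Finset.range n, (fun x : ℕ → Q => x ℓ) ⁻¹' {ext f ℓ} := by
      ext x
      simp [hCyl, Finset.mem_range]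
    rw [hrw]
    exact Finset.measurableSet_biInter _
      fun ℓ _ => (measurable_pi_apply ℓ) (measurableSet_singleton _)
  set cnt : (Fin n → Q) → ℕ := fun f => (blk.filter (fun i => f i = j)).card with hcnt
  set badF : Finset (Fin n → Q) :=
    Finset.univ.filter (fun f => ¬ |(cnt f : ℝ) / (mm : ℝ) - p k j| < ε) with hbadF
  have hmmR : (0 : ℝ) < mm := by exact_mod_cast hmm0
  -- inclusion of the bad set in the union of bad cylinders
  have hsub : {x : ℕ → Q | ¬ |(((Finset.Ico (S k) (S k + mm)).filter
        (fun ℓ => x ℓ = j)).card : ℝ) / (mm : ℝ) - p k j| < ε} ⊆ ⋃ f ∈ badF, Cyl f := by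
    intro x hx
    have hxc : x ∈ Cyl (fun i => x i.val) := by
      intro ℓ hℓ
      rw [hext]
      simp [hℓ]
    have hcnt_eq : cnt (fun i => x i.val)
        = ((Finset.Ico (S k) (S k + mm)).filter (fun ℓ => x ℓ = j)).card := by
      rw [hcnt]
      exact card_fin_filter (n := n) (a := S k) (fun ℓ => x ℓ = j)
    have hfmem : (fun i : Fin n => x i.val) ∈ badF := by
      rw [hbadF, Finset.mem_filter]
      refine ⟨Finset.mem_univ _, ?_⟩
      rw [hcnt_eq]
      exact hx
    exact Set.mem_biUnion hfmem hxc
  have hdisj : (↑badF : Set (Fin n → Q)).PairwiseDisjoint Cyl := by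
    intro f _ g _ hfg
    refine Set.disjoint_left.mpr fun x hxf hxg => hfg ?_
    funext i
    have h1 := hxf i.val i.isLt
    have h2 := hxg i.val i.isLt
    rw [hextval f i] at h1
    rw [hextval g i] at h2
    rw [← h1, ← h2]
  have hbadcond : ∀ f ∈ badF, ε * (blk.card : ℝ) ≤ |∑ i ∈ blk, χ (f i)| := by
    intro f hf
    rw [hbadF, Finset.mem_filter] at hf
    have hf2 := not_lt.mp hf.2
    have hY : ∑ i ∈ blk, χ (f i) = (cnt f : ℝ) - (mm : ℝ) * p k j := by
      simp only [hχdef]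
      rw [Finset.sum_sub_distrib, Finset.sum_const, hcard, Finset.sum_boole, hcnt]
      simp [nsmul_eq_mul]
    have habs : |(cnt f : ℝ) - (mm : ℝ) * p k j|
        = (mm : ℝ) * |(cnt f : ℝ) / (mm : ℝ) - p k j| := by
      rw [show (mm : ℝ) * |(cnt f : ℝ) / (mm : ℝ) - p k j|
          = |(mm : ℝ)| * |(cnt f : ℝ) / (mm : ℝ) - p k j| from by rw [abs_of_pos hmmR]]
      rw [← abs_mul]
      congr 1
      field_simp
    rw [hY, hcard, habs]
    have := mul_le_mul_of_nonneg_left hf2 (le_of_lt hmmR)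
    linarith
  calc μ {x : ℕ → Q | ¬ |(((Finset.Ico (S k) (S k + mm)).filter
        (fun ℓ => x ℓ = j)).card : ℝ) / (mm : ℝ) - p k j| < ε}
      ≤ μ (⋃ f ∈ badF, Cyl f) := measure_mono hsub
    _ = ∑ f ∈ badF, μ (Cyl f) := measure_biUnion_finset hdisj fun f _ => hmeas f
    _ = ∑ f ∈ badF, ENNReal.ofReal (∏ i, P i (f i)) := by
        refine Finset.sum_congr rfl fun f _ => ?_
        rw [hCyl]
        rw [hμ n (ext f)]
        congr 1
        rw [← Fin.prod_univ_eq_prod_range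
          (fun ℓ => p (Nat.findGreatest (fun k' => S k' ≤ ℓ) ℓ) (ext f ℓ)) n]
        refine Finset.prod_congr rfl fun i _ => ?_
        rw [hextval f i]
    _ = ENNReal.ofReal (∑ f ∈ badF, ∏ i, P i (f i)) :=
        (ENNReal.ofReal_sum_of_nonneg
          fun f _ => Finset.prod_nonneg fun i _ => hP0 i (f i)).symm
    _ ≤ ENNReal.ofReal (16 / (ε^4 * (mm : ℝ)^2)) := by
        apply ENNReal.ofReal_le_ofReal
        have hb := badsum P hP0 hP1 χ hχ blk hz ε hε (by rw [hcard]; exact hmm0) badF hbadcond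
        rw [hcard] at hb
        exact hb

theorem invsq_tail (M : ℕ) : ∀ N : ℕ, ∑ mm ∈ Finset.Ioc M N, (1 : ℝ) / (mm : ℝ)^2
    ≤ 2 / ((M : ℝ) + 1) - 2 / (((max M N : ℕ) : ℝ) + 1) := by
  intro N
  induction N with
  | zero =>
    simp [Finset.Ioc_eq_empty_of_le (Nat.zero_le M)]
  | succ N ih =>
    by_cases hMN : N + 1 ≤ M
    · rw [Finset.Ioc_eq_empty_of_le hMN, max_eq_left (by omega : N + 1 ≤ M)]
      simp
    · have hMN' : M ≤ N := by omega
      rw [Finset.sum_Ioc_succ_top hMN']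
      have hmax1 : max M N = N := max_eq_right hMN'
      have hmax2 : max M (N + 1) = N + 1 := max_eq_right (by omega)
      rw [hmax1] at ih
      rw [hmax2]
      have hstep : (1 : ℝ) / ((N : ℝ) + 1)^2 ≤ 2 / ((N : ℝ) + 1) - 2 / ((N : ℝ) + 1 + 1) := by
        have h1 : (0:ℝ) < (N:ℝ) + 1 := by positivity
        rw [div_sub_div _ _ (ne_of_gt h1) (by linarith : ((N:ℝ) + 1 + 1) ≠ 0)]
        rw [div_le_div_iff₀ (by positivity) (by nlinarith)]
        nlinarith
      push_cast
      push_cast at ih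
      linarith

theorem perEps {Q : Type*} [Fintype Q] [Nonempty Q] [DecidableEq Q] [MeasurableSpace Q]
    [MeasurableSingletonClass Q]
    (m : ℕ → ℕ) (hm : ∀ k, 0 < m k) (hsum : Summable fun k => ((m k : ℝ))⁻¹)
    (p : ℕ → Q → ℝ) (hp0 : ∀ k q, 0 ≤ p k q) (hp1 : ∀ k, ∑ q : Q, p k q = 1)
    (S : ℕ → ℕ) (hS : ∀ k, S k = ∑ i ∈ Finset.range k, m i)
    (μ : Measure (ℕ → Q))
    (hμ : ∀ (n : ℕ) (f : ℕ → Q),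
      μ {x : ℕ → Q | ∀ ℓ < n, x ℓ = f ℓ} =
        ENNReal.ofReal (∏ ℓ ∈ Finset.range n,
          p (Nat.findGreatest (fun k => S k ≤ ℓ) ℓ) (f ℓ)))
    (ε : ℝ) (hε : 0 < ε) :
    ∀ᵐ x ∂μ, ∃ K : ℕ, ∀ k ≥ K, ∀ mm : ℕ, ε * (m (k - 1) : ℝ) < (mm : ℝ) → mm ≤ m k →
      ∀ j : Q, |(((Finset.Ico (S k) (S k + mm)).filter (fun ℓ => x ℓ = j)).card : ℝ)
        / (mm : ℝ) - p k j| < ε := by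
  classical
  set s : ℕ → Set (ℕ → Q) := fun k => {x | ∃ mm : ℕ,
    (ε * (m (k - 1) : ℝ) < (mm : ℝ) ∧ mm ≤ m k) ∧ ∃ j : Q,
      ¬ |(((Finset.Ico (S k) (S k + mm)).filter (fun ℓ => x ℓ = j)).card : ℝ)
        / (mm : ℝ) - p k j| < ε} with hs
  set C : ℝ := (Fintype.card Q : ℝ) * (16 / ε^4) * (2 / ε) with hC
  have hmR : ∀ k : ℕ, (0:ℝ) < (m k : ℝ) := fun k => by exact_mod_cast hm k
  have hsk : ∀ k, μ (s k) ≤ ENNReal.ofReal (C * ((m (k - 1) : ℝ))⁻¹) := by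
    intro k
    set M := ⌊ε * (m (k - 1) : ℝ)⌋₊ with hM
    have hεm : (0:ℝ) < ε * (m (k - 1) : ℝ) := mul_pos hε (hmR (k - 1))
    set Bad : ℕ → Q → Set (ℕ → Q) := fun mm j =>
      {x : ℕ → Q | ¬ |(((Finset.Ico (S k) (S k + mm)).filter (fun ℓ => x ℓ = j)).card : ℝ)
        / (mm : ℝ) - p k j| < ε} with hBad
    have hcover : s k ⊆ ⋃ mm ∈ Finset.Ioc M (m k), ⋃ j ∈ (Finset.univ : Finset Q), Bad mm j := by
      intro x hx
      obtain ⟨mm, ⟨h1, h2⟩, j, hj⟩ := hx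
      have hmmIoc : mm ∈ Finset.Ioc M (m k) := by
        rw [Finset.mem_Ioc]
        refine ⟨?_, h2⟩
        have hfl : (M : ℝ) ≤ ε * (m (k - 1) : ℝ) := Nat.floor_le (le_of_lt hεm)
        exact_mod_cast lt_of_le_of_lt hfl h1
      exact Set.mem_biUnion hmmIoc (Set.mem_biUnion (Finset.mem_univ j) hj)
    have hbound : ∀ mm ∈ Finset.Ioc M (m k), ∀ j : Q,
        μ (Bad mm j) ≤ ENNReal.ofReal (16 / (ε^4 * (mm : ℝ)^2)) := by
      intro mm hmm j
      rw [Finset.mem_Ioc] at hmm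
      exact blockEvent m hm p hp0 hp1 S hS μ hμ ε hε k mm
        (lt_of_le_of_lt (Nat.zero_le M) hmm.1) hmm.2 j
    calc μ (s k) ≤ μ (⋃ mm ∈ Finset.Ioc M (m k), ⋃ j ∈ (Finset.univ : Finset Q), Bad mm j) :=
          measure_mono hcover
      _ ≤ ∑ mm ∈ Finset.Ioc M (m k), μ (⋃ j ∈ (Finset.univ : Finset Q), Bad mm j) :=
          measure_biUnion_finset_le _ _
      _ ≤ ∑ mm ∈ Finset.Ioc M (m k), ∑ j ∈ (Finset.univ : Finset Q), μ (Bad mm j) :=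
          Finset.sum_le_sum fun mm _ => measure_biUnion_finset_le _ _
      _ ≤ ∑ mm ∈ Finset.Ioc M (m k), ∑ _j ∈ (Finset.univ : Finset Q),
            ENNReal.ofReal (16 / (ε^4 * (mm : ℝ)^2)) :=
          Finset.sum_le_sum fun mm hmm => Finset.sum_le_sum fun j _ => hbound mm hmm j
      _ = ENNReal.ofReal (∑ mm ∈ Finset.Ioc M (m k), ∑ _j ∈ (Finset.univ : Finset Q),
            16 / (ε^4 * (mm : ℝ)^2)) := by
          refine Eq.symm ?_
          rw [ENNReal.ofReal_sum_of_nonneg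
            (fun mm _ => Finset.sum_nonneg fun j _ => by positivity)]
          refine Finset.sum_congr rfl fun mm _ => ?_
          rw [ENNReal.ofReal_sum_of_nonneg (fun j _ => by positivity)]
      _ ≤ ENNReal.ofReal (C * ((m (k - 1) : ℝ))⁻¹) := by
          apply ENNReal.ofReal_le_ofReal
          have hstep1 : ∑ mm ∈ Finset.Ioc M (m k), ∑ _j ∈ (Finset.univ : Finset Q),
              16 / (ε^4 * (mm : ℝ)^2)
              = (Fintype.card Q : ℝ) * (16 / ε^4) * ∑ mm ∈ Finset.Ioc M (m k), 1 / (mm : ℝ)^2 := by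
            rw [Finset.mul_sum]
            refine Finset.sum_congr rfl fun mm hmem => ?_
            rw [Finset.mem_Ioc] at hmem
            have hmmne : (mm : ℝ) ≠ 0 := by
              have : 0 < mm := lt_of_le_of_lt (Nat.zero_le M) hmem.1
              positivity
            have hεne : ε ≠ 0 := ne_of_gt hε
            rw [Finset.sum_const, Finset.card_univ, nsmul_eq_mul]
            field_simp
          rw [hstep1]
          have htail : ∑ mm ∈ Finset.Ioc M (m k), 1 / (mm : ℝ)^2 ≤ 2 / ((M : ℝ) + 1) := by
            refine le_trans (invsq_tail M (m k)) ?_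
            have : (0:ℝ) ≤ 2 / (((max M (m k) : ℕ) : ℝ) + 1) := by positivity
            linarith
          have hM1 : ε * (m (k - 1) : ℝ) ≤ (M : ℝ) + 1 := le_of_lt (Nat.lt_floor_add_one _)
          have htail2 : (2:ℝ) / ((M : ℝ) + 1) ≤ 2 / (ε * (m (k - 1) : ℝ)) := by
            gcongr
          have hfin : (Fintype.card Q : ℝ) * (16 / ε^4) * (2 / (ε * (m (k - 1) : ℝ)))
              = C * ((m (k - 1) : ℝ))⁻¹ := by
            have hmne : (m (k - 1) : ℝ) ≠ 0 := ne_of_gt (hmR (k - 1))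
            have hεne : ε ≠ 0 := ne_of_gt hε
            rw [hC]
            field_simp
          calc (Fintype.card Q : ℝ) * (16 / ε^4) * ∑ mm ∈ Finset.Ioc M (m k), 1 / (mm : ℝ)^2
              ≤ (Fintype.card Q : ℝ) * (16 / ε^4) * (2 / ((M : ℝ) + 1)) := by
                refine mul_le_mul_of_nonneg_left htail ?_
                positivity
            _ ≤ (Fintype.card Q : ℝ) * (16 / ε^4) * (2 / (ε * (m (k - 1) : ℝ))) := by
                refine mul_le_mul_of_nonneg_left htail2 ?_
                positivity
            _ = C * ((m (k - 1) : ℝ))⁻¹ := hfin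
  have hsumm : Summable (fun k : ℕ => C * ((m (k - 1) : ℝ))⁻¹) := by
    apply Summable.mul_left
    refine (_root_.summable_nat_add_iff 1).mp ?_
    simpa using hsum
  have htsum : ∑' k, μ (s k) ≠ ⊤ := by
    refine ne_top_of_le_ne_top ?_ (ENNReal.tsum_le_tsum hsk)
    rw [← ENNReal.ofReal_tsum_of_nonneg (fun k => by positivity) hsumm]
    exact ENNReal.ofReal_ne_top
  have hlimsup := MeasureTheory.measure_limsup_atTop_eq_zero htsum
  have hae := measure_eq_zero_iff_ae_notMem.mp hlimsup
  filter_upwards [hae] with x hx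
  have hx2 : ¬ ∃ᶠ k in Filter.atTop, x ∈ s k :=
    fun h => hx (Filter.mem_limsup_iff_frequently_mem.mpr h)
  have hev : ∀ᶠ k in Filter.atTop, x ∉ s k := Filter.not_frequently.mp hx2
  obtain ⟨K, hK⟩ := Filter.eventually_atTop.mp hev
  refine ⟨K, fun k hk mm h1 h2 j => ?_⟩
  by_contra hcon
  exact hK k hk ⟨mm, ⟨h1, h2⟩, j, hcon⟩

/-- Frequencies in blocks of a piecewise Bernoulli measure: if `∑ 1/m_k < ∞` and `μ` is the
product measure whose marginal on the `ℓ`-th coordinate is `p k` when `S k ≤ ℓ < S (k+1)`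
(`S k = m 0 + ⋯ + m (k-1)`), then `μ`-a.e. sequence `x` satisfies: for every sufficiently
small `ε > 0` there is `K` such that for all `k ≥ K`, all `m` with `ε m_{k-1} < m ≤ m_k`
and every symbol `j`, the frequency of `j` among the first `m` entries of the `k`-th block
is within `ε` of `p k j`. -/
theorem stmt11 (Q : Type*) [Fintype Q] [Nonempty Q] [DecidableEq Q] [MeasurableSpace Q]
    [MeasurableSingletonClass Q]
    (m : ℕ → ℕ) (hm : ∀ k, 0 < m k) (hsum : Summable fun k => ((m k : ℝ))⁻¹)
    (p : ℕ → Q → ℝ) (hp0 : ∀ k q, 0 ≤ p k q) (hp1 : ∀ k, ∑ q : Q, p k q = 1)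
    (S : ℕ → ℕ) (hS : ∀ k, S k = ∑ i ∈ Finset.range k, m i)
    (μ : Measure (ℕ → Q)) [IsProbabilityMeasure μ]
    (hμ : ∀ (n : ℕ) (f : ℕ → Q),
      μ {x : ℕ → Q | ∀ ℓ < n, x ℓ = f ℓ} =
        ENNReal.ofReal (∏ ℓ ∈ Finset.range n,
          p (Nat.findGreatest (fun k => S k ≤ ℓ) ℓ) (f ℓ))) :
    ∀ᵐ x ∂μ, ∃ ε₀ > (0 : ℝ), ∀ ε : ℝ, 0 < ε → ε < ε₀ → ∃ K : ℕ, ∀ k ≥ K, ∀ mm : ℕ,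
      ε * (m (k - 1) : ℝ) < (mm : ℝ) → mm ≤ m k → ∀ j : Q,
      |(((Finset.Ico (S k) (S k + mm)).filter (fun ℓ => x ℓ = j)).card : ℝ) / (mm : ℝ)
          - p k j| < ε := by

  have hall : ∀ᵐ x ∂μ, ∀ ii : ℕ, ∃ K : ℕ, ∀ k ≥ K, ∀ mm : ℕ,
      (1 / ((ii : ℝ) + 1)) * (m (k - 1) : ℝ) < (mm : ℝ) → mm ≤ m k → ∀ j : Q,
      |(((Finset.Ico (S k) (S k + mm)).filter (fun ℓ => x ℓ = j)).card : ℝ) / (mm : ℝ)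
          - p k j| < 1 / ((ii : ℝ) + 1) := by
    rw [MeasureTheory.ae_all_iff]
    intro ii
    exact perEps m hm hsum p hp0 hp1 S hS μ hμ (1 / ((ii : ℝ) + 1)) (by positivity)
  filter_upwards [hall] with x hx
  refine ⟨1, one_pos, fun ε hε _ => ?_⟩
  obtain ⟨ii, hii⟩ := exists_nat_one_div_lt hε
  obtain ⟨K, hK⟩ := hx ii
  refine ⟨K, fun k hk mm h1 h2 j => ?_⟩
  have hm0 : (0:ℝ) ≤ (m (k - 1) : ℝ) := Nat.cast_nonneg _
  have h1' : (1 / ((ii : ℝ) + 1)) * (m (k - 1) : ℝ) < (mm : ℝ) := by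
    have := mul_le_mul_of_nonneg_right (le_of_lt hii) hm0
    linarith
  exact lt_trans (hK k hk mm h1' h2 j) hii
end
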